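/- arXiv:1507.08745 — 3 statements merged into one kernel-verified Lean document; each statement's English description precedes it below -/
import Mathlib

section
/- For every integer k ≥ 1, every finite connected graph G has a spanning tree T such that γ_k(T) = γ_k(G). -/
/-- `S` is a distance `k`-dominating set of `G`: every vertex is joined to some
vertex of `S` by a path (walk) of length at most `k`. -/
def SimpleGraph.IsKDomSet {V : Type*} (G : SimpleGraph V) (k : ℕ) (S : Set V) : Prop :=
  ∀ v : V, ∃ u ∈ S, ∃ p : G.Walk u v, p.length ≤ k

/-- The distance `k`-domination number of `G`: the minimum cardinality of a
distance `k`-dominating set. -/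
noncomputable def SimpleGraph.kDomNum {V : Type*} (G : SimpleGraph V) (k : ℕ) : ℕ :=
  sInf {n : ℕ | ∃ S : Set V, G.IsKDomSet k S ∧ S.ncard = n}


namespace KDomAux

open SimpleGraph Walk

variable {V : Type*}

lemma reachable_delete {H : SimpleGraph V} {v w : V}
    (hvw : (H.deleteEdges {s(v, w)}).Reachable v w) {a b : V} (p : H.Walk a b) :
    (H.deleteEdges {s(v, w)}).Reachable a b := by
  induction p with
  | nil => exact Reachable.refl _
  | @cons a c b h q ih =>
    refine Reachable.trans ?_ ih
    by_cases he : s(a, c) = s(v, w)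
    · rw [Sym2.eq_iff] at he
      rcases he with ⟨rfl, rfl⟩ | ⟨rfl, rfl⟩
      · exact hvw
      · exact hvw.symm
    · exact (SimpleGraph.deleteEdges_adj.mpr ⟨h, by simpa using he⟩).reachable

lemma connected_deleteEdge {H : SimpleGraph V} (hc : H.Connected) {v w : V}
    (hvw : (H.deleteEdges {s(v, w)}).Reachable v w) :
    (H.deleteEdges {s(v, w)}).Connected := by
  rw [connected_iff]
  exact ⟨fun a b => reachable_delete hvw (hc.preconnected a b).some, hc.nonempty⟩

lemma no_cycle_in_parent {F H : SimpleGraph V} (d : V → ℕ) (pa : V → V)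
    (hF : ∀ a b : V, F.Adj a b → (d b ≠ 0 ∧ pa b = a) ∨ (d a ≠ 0 ∧ pa a = b))
    (hpa : ∀ v, d v ≠ 0 → d (pa v) + 1 = d v)
    {x : V} (c : H.Walk x x) (hc : c.IsCycle)
    (hE : ∀ e ∈ c.edges, e ∈ F.edgeSet) : False := by
  classical
  obtain ⟨m, hm', hmax'⟩ := Finset.exists_max_image c.support.toFinset d
    ⟨x, List.mem_toFinset.mpr c.start_mem_support⟩
  have hm : m ∈ c.support := List.mem_toFinset.mp hm'
  have hmax : ∀ y ∈ c.support, d y ≤ d m := fun y hy => hmax' y (List.mem_toFinset.mpr hy)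
  set c' : H.Walk m m := c.rotate m hm with hc'def
  have hc' : c'.IsCycle := hc.rotate hm
  have hE' : ∀ e ∈ c'.edges, e ∈ F.edgeSet := fun e he =>
    hE e ((c.rotate_edges m hm).mem_iff.mp he)
  have hsup : ∀ y ∈ c'.support, d y ≤ d m := by
    intro y hy
    rw [c'.support_eq_cons, List.mem_cons] at hy
    rcases hy with rfl | hy
    · exact le_rfl
    · exact hmax y (List.mem_of_mem_tail ((Walk.support_rotate c m hm).mem_iff.mp hy))
  -- destructure first edge
  obtain ⟨y₁, h1, q, hq⟩ := Walk.not_nil_iff.mp hc'.not_nil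
  -- destructure last edge, via reverse of q
  have hqnil : ¬q.Nil := by
    have h3 := hc'.three_le_length
    rw [hq] at h3
    simp only [Walk.length_cons] at h3
    rw [Walk.nil_iff_length_eq]
    omega
  have hqrnil : ¬q.reverse.Nil := by
    rw [Walk.nil_iff_length_eq, Walk.length_reverse]
    rw [Walk.nil_iff_length_eq] at hqnil
    exact hqnil
  obtain ⟨z, h2, q2, hq2⟩ := Walk.not_nil_iff.mp hqrnil
  have hzq : s(m, z) ∈ q.edges := by
    have : s(m, z) ∈ q.reverse.edges := by rw [hq2]; simp
    rw [Walk.edges_reverse, List.mem_reverse] at this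
    exact this
  have hy₁mem : y₁ ∈ c'.support := by
    rw [hq]
    simp [Walk.support_cons]
  have hzmem : z ∈ c'.support := by
    have : z ∈ q.reverse.support := by rw [hq2]; simp
    rw [Walk.support_reverse, List.mem_reverse] at this
    rw [hq, Walk.support_cons]
    exact List.mem_cons_of_mem _ this
  have hdy : d y₁ ≤ d m := hsup _ hy₁mem
  have hdz : d z ≤ d m := hsup _ hzmem
  have hFy : F.Adj m y₁ := by
    have h := hE' s(m, y₁) (by rw [hq]; simp)
    rwa [SimpleGraph.mem_edgeSet] at h
  have hFz : F.Adj m z := by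
    have h := hE' s(m, z) (by rw [hq, Walk.edges_cons]; exact List.mem_cons_of_mem _ hzq)
    rwa [SimpleGraph.mem_edgeSet] at h
  have hpy : pa m = y₁ := by
    rcases hF m y₁ hFy with ⟨h0, hp⟩ | ⟨h0, hp⟩
    · have := hpa y₁ h0; rw [hp] at this; omega
    · exact hp
  have hpz : pa m = z := by
    rcases hF m z hFz with ⟨h0, hp⟩ | ⟨h0, hp⟩
    · have := hpa z h0; rw [hp] at this; omega
    · exact hp
  have hyz : y₁ = z := hpy ▸ hpz
  subst hyz
  have hnodup : c'.edges.Nodup := hc'.isCircuit.isTrail.edges_nodup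
  rw [hq, Walk.edges_cons] at hnodup
  exact (List.nodup_cons.mp hnodup).1 hzq

lemma exists_tree [Fintype V] (F G : SimpleGraph V) (hFG : F ≤ G) (hG : G.Connected)
    (hnc : ∀ (H : SimpleGraph V) (x : V) (c : H.Walk x x), c.IsCycle →
      (∀ e ∈ c.edges, e ∈ F.edgeSet) → False) :
    ∃ T : SimpleGraph V, F ≤ T ∧ T ≤ G ∧ T.IsTree := by
  classical
  set B : Set ℕ := {n | ∃ H : SimpleGraph V, F ≤ H ∧ H ≤ G ∧ H.Connected ∧ H.edgeSet.ncard = n}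
    with hBdef
  have hBne : B.Nonempty := ⟨G.edgeSet.ncard, G, hFG, le_rfl, hG, rfl⟩
  obtain ⟨H, hFH, hHG, hHc, hHcard⟩ := Nat.sInf_mem hBne
  refine ⟨H, hFH, hHG, hHc, ?_⟩
  intro x c hcyc
  have hex : ∃ e ∈ c.edges, e ∉ F.edgeSet := by
    by_contra hcon
    push_neg at hcon
    exact hnc H x c hcyc hcon
  obtain ⟨e, hec, heF⟩ := hex
  revert hec heF
  induction e using Sym2.ind with
  | _ v w =>
    intro hec heF
    have hadj : H.Adj v w := c.adj_of_mem_edges hec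
    have hreach : (H.deleteEdges {s(v, w)}).Reachable v w :=
      (SimpleGraph.adj_and_reachable_delete_edges_iff_exists_cycle.mpr ⟨x, c, hcyc, hec⟩).2
    set H' := H.deleteEdges {s(v, w)} with hH'def
    have hH'c : H'.Connected := connected_deleteEdge hHc hreach
    have hFH' : F ≤ H' := by
      intro a b hab
      refine SimpleGraph.deleteEdges_adj.mpr ⟨hFH hab, ?_⟩
      intro hmem
      rw [Set.mem_singleton_iff] at hmem
      exact heF (hmem ▸ (F.mem_edgeSet.mpr hab))
    have hH'G : H' ≤ G := le_trans (SimpleGraph.deleteEdges_le _) hHG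
    have hcard : H'.edgeSet.ncard < H.edgeSet.ncard := by
      rw [hH'def, SimpleGraph.edgeSet_deleteEdges]
      exact Set.ncard_diff_singleton_lt_of_mem hadj (Set.toFinite _)
    have : H'.edgeSet.ncard ∈ B := ⟨H', hFH', hH'G, hH'c, rfl⟩
    have := Nat.sInf_le this
    omega

end KDomAux

/-- Every finite connected graph `G` has a spanning tree `T` with `γ_k(T) = γ_k(G)`. -/
theorem exists_spanningTree_kDomNum_eq {V : Type*} [Fintype V] (k : ℕ) (hk : 1 ≤ k)
    (G : SimpleGraph V) (hG : G.Connected) :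
    ∃ T : SimpleGraph V, T ≤ G ∧ T.IsTree ∧ T.kDomNum k = G.kDomNum k := by
  classical
  open SimpleGraph in
  -- a minimum k-dominating set S of G
  have hSne : {n : ℕ | ∃ S : Set V, G.IsKDomSet k S ∧ S.ncard = n}.Nonempty :=
    ⟨(Set.univ : Set V).ncard, Set.univ, fun v => ⟨v, trivial, SimpleGraph.Walk.nil, by simp⟩, rfl⟩
  obtain ⟨S, hS, hScard⟩ := Nat.sInf_mem hSne
  -- distance to S
  set d : V → ℕ := fun v => sInf {n : ℕ | ∃ u ∈ S, ∃ p : G.Walk u v, p.length = n} with hddef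
  have hDne : ∀ v : V, {n : ℕ | ∃ u ∈ S, ∃ p : G.Walk u v, p.length = n}.Nonempty := by
    intro v
    obtain ⟨u, hu, p, hp⟩ := hS v
    exact ⟨p.length, u, hu, p, rfl⟩
  have hdk : ∀ v, d v ≤ k := by
    intro v
    obtain ⟨u, hu, p, hp⟩ := hS v
    exact le_trans (Nat.sInf_le ⟨u, hu, p, rfl⟩) hp
  have hd0 : ∀ v, d v = 0 → v ∈ S := by
    intro v hv
    obtain ⟨u, hu, p, hp⟩ := Nat.sInf_mem (hDne v)
    have hp' : p.length = d v := hp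
    rw [hv] at hp'
    have := SimpleGraph.Walk.eq_of_length_eq_zero hp'
    exact this ▸ hu
  have hpar : ∀ v, d v ≠ 0 → ∃ w, G.Adj w v ∧ d w + 1 = d v := by
    intro v hv
    obtain ⟨u, hu, p, hp0⟩ := Nat.sInf_mem (hDne v)
    have hp : p.length = d v := hp0
    have hn : ¬p.reverse.Nil := by
      rw [SimpleGraph.Walk.nil_iff_length_eq, SimpleGraph.Walk.length_reverse, hp]
      exact hv
    obtain ⟨w, hvw, q, hq⟩ := SimpleGraph.Walk.not_nil_iff.mp hn
    have hlq : q.length + 1 = d v := by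
      have := congrArg SimpleGraph.Walk.length hq
      rw [SimpleGraph.Walk.length_reverse, hp] at this
      simpa using this.symm
    have h1 : d w ≤ q.length := Nat.sInf_le ⟨u, hu, q.reverse, by simp⟩
    have h2 : d v ≤ d w + 1 := by
      obtain ⟨u', hu', r, hr0⟩ := Nat.sInf_mem (hDne w)
      have hr : r.length = d w := hr0
      exact Nat.sInf_le ⟨u', hu', r.concat hvw.symm, by simp [SimpleGraph.Walk.length_concat, hr]⟩
    exact ⟨w, hvw.symm, by omega⟩
  -- parent function
  set pa : V → V := fun v => if h : d v = 0 then v else (hpar v h).choose with hpadef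
  have hpaAdj : ∀ v, d v ≠ 0 → G.Adj (pa v) v := by
    intro v hv
    rw [hpadef]
    simp only [hv, dif_neg, not_false_iff]
    exact (hpar v hv).choose_spec.1
  have hpaD : ∀ v, d v ≠ 0 → d (pa v) + 1 = d v := by
    intro v hv
    rw [hpadef]
    simp only [hv, dif_neg, not_false_iff]
    exact (hpar v hv).choose_spec.2
  -- the BFS forest
  set F : SimpleGraph V :=
    { Adj := fun a b => (d b ≠ 0 ∧ pa b = a) ∨ (d a ≠ 0 ∧ pa a = b)
      symm := by
        refine ⟨fun a b h => ?_⟩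
        tauto
      loopless := by
        refine ⟨fun a h => ?_⟩
        rcases h with ⟨h0, hp⟩ | ⟨h0, hp⟩ <;>
          exact (G.ne_of_adj (hpaAdj a h0)) (by rw [hp])
      } with hFdef
  have hFadj : ∀ a b : V, F.Adj a b ↔ ((d b ≠ 0 ∧ pa b = a) ∨ (d a ≠ 0 ∧ pa a = b)) := by
    intro a b; rw [hFdef]
  have hFG : F ≤ G := by
    intro a b h
    rw [hFadj] at h
    rcases h with ⟨h0, hp⟩ | ⟨h0, hp⟩
    · exact hp ▸ (hpaAdj b h0)
    · exact (hp ▸ (hpaAdj a h0)).symm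
  obtain ⟨T, hFT, hTG, hTree⟩ := KDomAux.exists_tree F G hFG hG
    (fun H x c hc hE => KDomAux.no_cycle_in_parent d pa (fun a b h => (hFadj a b).mp h)
      hpaD c hc hE)
  refine ⟨T, hTG, hTree, ?_⟩
  -- S dominates T via walks in F
  have walkF : ∀ (n : ℕ) (v : V), d v = n → ∃ u ∈ S, ∃ p : F.Walk u v, p.length = n := by
    intro n
    induction n with
    | zero => exact fun v h0 => ⟨v, hd0 v h0, SimpleGraph.Walk.nil, rfl⟩
    | succ n ih =>
      intro v hv
      have hv0 : d v ≠ 0 := by omega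
      have hadj : F.Adj (pa v) v := (hFadj _ _).mpr (Or.inl ⟨hv0, rfl⟩)
      have hd' : d (pa v) = n := by have := hpaD v hv0; omega
      obtain ⟨u, hu, p, hp⟩ := ih (pa v) hd'
      exact ⟨u, hu, p.concat hadj, by rw [SimpleGraph.Walk.length_concat, hp]⟩
  have hSdomT : T.IsKDomSet k S := by
    intro v
    obtain ⟨u, hu, p, hp⟩ := walkF (d v) v rfl
    refine ⟨u, hu, p.map (SimpleGraph.Hom.ofLE hFT), ?_⟩
    rw [SimpleGraph.Walk.length_map, hp]
    exact hdk v
  -- conclude equality of kDomNum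
  have hle : T.kDomNum k ≤ G.kDomNum k := Nat.sInf_le ⟨S, hSdomT, hScard⟩
  have hTne : {n : ℕ | ∃ S' : Set V, T.IsKDomSet k S' ∧ S'.ncard = n}.Nonempty :=
    ⟨(Set.univ : Set V).ncard, Set.univ, fun v => ⟨v, trivial, SimpleGraph.Walk.nil, by simp⟩, rfl⟩
  obtain ⟨S', hS', hS'card⟩ := Nat.sInf_mem hTne
  have hS'G : G.IsKDomSet k S' := by
    intro v
    obtain ⟨u, hu, p, hp⟩ := hS' v
    refine ⟨u, hu, p.map (SimpleGraph.Hom.ofLE hTG), ?_⟩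
    rw [SimpleGraph.Walk.length_map]
    exact hp
  have hge : G.kDomNum k ≤ T.kDomNum k := Nat.sInf_le ⟨S', hS'G, hS'card⟩
  exact le_antisymm hle hge
end

section
/- Let k ≥ 1 be an integer, let G be a finite connected graph containing a cycle, and let C be a shortest cycle in G (a cycle whose length equals the girth of G). If v is a vertex of G not lying on C such that at least 2k vertices of C are at distance at most k from v in G, then there exist two vertices u and w on C, each at distance at most k from v in G, such that some shortest path in G between u and v does not contain w, and some shortest path in G between v and w does not contain u. -/
/-!
Let `F` be the set of cycle vertices `k`-dominated by `v` and let `u ∈ F` be closest to `v`; a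
shortest `v-u` path then meets `F` only in `u`. If some `w ∈ F \ {u}` has a shortest `v-w` path
avoiding `u` we are done. Otherwise every `x ∈ F` has `d(u, x) ≤ d(v, x) - d(v, u) ≤ k - 1`.
But a shortest cycle `C` is isometric: two distinct paths with the same ends span a cycle of
length at most the sum of their lengths, so `d(u, x)` is at least the shorter arc of `C` from `u`
to `x`. Hence at most `2k - 1` vertices of `C` lie within distance `k - 1` of `u`, contradicting
`|F| ≥ 2k`.
-/

namespace SimpleGraph

variable {V : Type*} {G : SimpleGraph V}

theorem egirth_le_length_add_length_of_ne {x y : V} {p q : G.Walk x y} (hp : p.IsPath)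
    (hq : q.IsPath) (hpq : p ≠ q) : G.egirth ≤ p.length + q.length := by
  set H : SimpleGraph V := fromEdgeSet {e | e ∈ p.edges ∨ e ∈ q.edges}
  have hpH : ∀ e ∈ p.edges, e ∈ H.edgeSet := fun e he => by
    simp [H, he, G.not_isDiag_of_mem_edgeSet (p.edges_subset_edgeSet he)]
  have hqH : ∀ e ∈ q.edges, e ∈ H.edgeSet := fun e he => by
    simp [H, he, G.not_isDiag_of_mem_edgeSet (q.edges_subset_edgeSet he)]
  have hHG : H ≤ G := (fromEdgeSet_le G).2 fun e ⟨he, _⟩ => he.elim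
    (fun h => p.edges_subset_edgeSet h) (fun h => q.edges_subset_edgeSet h)
  have hH : ¬ H.IsAcyclic := fun hH => hpq <| Walk.ext_support <| by
    simpa using congrArg (fun r : H.Path x y => r.1.support)
      ((hH.subsingleton_path x y).elim ⟨p.transfer H hpH, hp.transfer hpH⟩
        ⟨q.transfer H hqH, hq.transfer hqH⟩)
  obtain ⟨a, w, hw⟩ : ∃ a, ∃ w : H.Walk a a, w.IsCycle := by
    simpa [IsAcyclic] using hH
  have hwpq : w.edges ⊆ p.edges ++ q.edges := fun e he => by
    have := w.edges_subset_edgeSet he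
    simp only [H, edgeSet_fromEdgeSet] at this
    simpa using this.1
  calc G.egirth ≤ H.egirth := egirth_anti hHG
    _ ≤ w.length := egirth_le_length hw
    _ ≤ p.length + q.length := by
      have := (hw.edges_nodup.subperm hwpq).length_le
      simp only [List.length_append, Walk.length_edges] at this
      exact_mod_cast this

theorem dist_add_dist_le_of_mem_support {v x u : V} {p : G.Walk v x}
    (hp : p.length = G.dist v x) (hu : u ∈ p.support) :
    G.dist v u + G.dist u x ≤ G.dist v x := by
  classical
  calc G.dist v u + G.dist u x
      ≤ (p.takeUntil u hu).length + (p.dropUntil u hu).length := add_le_add (dist_le _) (dist_le _)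
    _ = G.dist v x := by rw [← Walk.length_append, p.take_spec hu, hp]

theorem dist_lt_of_mem_support_of_ne {v u w : V} {p : G.Walk v u}
    (hp : p.length = G.dist v u) (hw : w ∈ p.support) (hwu : w ≠ u) :
    G.dist v w < G.dist v u := by
  classical
  have := dist_add_dist_le_of_mem_support hp hw
  have := (p.dropUntil w hw).reachable.pos_dist_of_ne hwu
  omega

namespace Walk

theorem IsCycle.min_length_takeUntil_dropUntil_le_dist [DecidableEq V] {u x : V}
    {c : G.Walk u u} (hc : c.IsCycle) (hmin : (c.length : ℕ∞) ≤ G.egirth)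
    (hx : x ∈ c.support) :
    min (c.takeUntil x hx).length (c.dropUntil x hx).length ≤ G.dist u x := by
  obtain ⟨P, hP, hPlen⟩ := (c.takeUntil x hx).reachable.exists_path_of_dist
  by_cases hPA : P = c.takeUntil x hx
  · exact hPA ▸ hPlen ▸ min_le_left _ _
  · have hlen : (c.takeUntil x hx).length + (c.dropUntil x hx).length = c.length := by
      rw [← length_append, c.take_spec hx]
    have := hmin.trans (egirth_le_length_add_length_of_ne hP (hc.isPath_takeUntil hx) hPA)
    norm_cast at this
    omega

theorem IsCycle.ncard_setOf_mem_support_dist_le {a u : V} {c : G.Walk a a} (hc : c.IsCycle)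
    (hmin : (c.length : ℕ∞) ≤ G.egirth) (hu : u ∈ c.support) (r : ℕ) :
    {x | x ∈ c.support ∧ G.dist u x ≤ r}.ncard ≤ 2 * r + 1 := by
  classical
  set c' := c.rotate u hu
  have hc' : c'.IsCycle := hc.rotate hu
  have hmin' : (c'.length : ℕ∞) ≤ G.egirth := by rwa [length_rotate]
  set I := Finset.range (r + 1) ∪ Finset.Ico (c'.length - r) c'.length
  have hsub : {x | x ∈ c.support ∧ G.dist u x ≤ r} ⊆ I.image c'.getVert := by
    rintro x ⟨hx, hxr⟩
    rw [← c.mem_support_rotate_iff u hu] at hx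
    by_cases hxu : x = u
    · subst hxu
      exact Finset.mem_image.2 ⟨0, by simp [I], c'.getVert_zero⟩
    have hlt := c'.length_takeUntil_lt_length hx hxu
    have hlen : (c'.takeUntil x hx).length + (c'.dropUntil x hx).length = c'.length := by
      rw [← length_append, c'.take_spec hx]
    have hdist := (hc'.min_length_takeUntil_dropUntil_le_dist hmin' hx).trans hxr
    refine Finset.mem_image.2 ⟨_, ?_, c'.getVert_length_takeUntil hx⟩
    simp only [I, Finset.mem_union, Finset.mem_range, Finset.mem_Ico]
    omega
  calc {x | x ∈ c.support ∧ G.dist u x ≤ r}.ncard ≤ (I.image c'.getVert : Set V).ncard :=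
        Set.ncard_le_ncard hsub (Finset.finite_toSet _)
    _ ≤ I.card := by rw [Set.ncard_coe_finset]; exact Finset.card_image_le
    _ ≤ (r + 1) + r := (Finset.card_union_le _ _).trans
        (by simp only [Finset.card_range, Nat.card_Ico]; omega)
    _ = 2 * r + 1 := by ring

end Walk

end SimpleGraph

theorem exists_two_kDominated_cycle_vertices_general {V : Type*}
    (k : ℕ) (hk : 1 ≤ k) (G : SimpleGraph V) (hG : G.Connected)
    (a : V) (c : G.Walk a a) (hc : c.IsCycle) (hshort : (c.length : ℕ∞) = G.girth)
    (v : V) (hv : v ∉ c.support)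
    (hdom : 2 * k ≤ ({x | x ∈ c.support ∧ G.dist v x ≤ k} : Set V).ncard) :
    ∃ u ∈ c.support, ∃ w ∈ c.support,
      G.dist v u ≤ k ∧ G.dist v w ≤ k ∧
      (∃ p : G.Walk u v, p.IsPath ∧ p.length = G.dist u v ∧ w ∉ p.support) ∧
      (∃ q : G.Walk v w, q.IsPath ∧ q.length = G.dist v w ∧ u ∉ q.support) := by
  classical
  set F := {x | x ∈ c.support ∧ G.dist v x ≤ k}
  have hF : F.Finite := (List.finite_toSet c.support).subset fun x hx => hx.1
  obtain ⟨u, ⟨hu, hvu⟩, hu_min⟩ :=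
    F.exists_min_image (G.dist v) hF (Set.nonempty_of_ncard_ne_zero (by omega))
  obtain ⟨p, hp, hplen⟩ := hG.exists_path_of_dist v u
  by_cases hq : ∃ w ∈ F, w ≠ u ∧
      ∃ q : G.Walk v w, q.IsPath ∧ q.length = G.dist v w ∧ u ∉ q.support
  · obtain ⟨w, hw, hwu, hq⟩ := hq
    refine ⟨u, hu, w, hw.1, hvu, hw.2, ⟨p.reverse, hp.reverse, ?_, ?_⟩, hq⟩
    · rw [SimpleGraph.Walk.length_reverse, hplen, SimpleGraph.dist_comm]
    · simpa using fun hwp =>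
        (hu_min w hw).not_gt (SimpleGraph.dist_lt_of_mem_support_of_ne hplen hwp hwu)
  push Not at hq
  have hvu_pos : 0 < G.dist v u := hG.pos_dist_of_ne (by rintro rfl; exact hv hu)
  have hFu : F ⊆ {x | x ∈ c.support ∧ G.dist u x ≤ k - 1} := by
    rintro x ⟨hxc, hxk⟩
    refine ⟨hxc, ?_⟩
    rcases eq_or_ne x u with rfl | hxu
    · simp
    obtain ⟨q, hq', hqlen⟩ := hG.exists_path_of_dist v x
    have := SimpleGraph.dist_add_dist_le_of_mem_support hqlen (hq x ⟨hxc, hxk⟩ hxu q hq' hqlen)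
    omega
  have hmin : (c.length : ℕ∞) ≤ G.egirth := hshort ▸ ENat.natCast_toNat_le_self _
  have := (Set.ncard_le_ncard hFu ((List.finite_toSet _).subset fun x hx => hx.1)).trans
    (hc.ncard_setOf_mem_support_dist_le hmin hu (k - 1))
  omega

/-- Let `C` be a shortest cycle in a finite connected graph `G` (a cycle whose length
equals the girth).  If `v` is a vertex not on `C` that `k`-dominates at least `2k`
vertices of `C`, then there are vertices `u, w` on `C`, both within distance `k` of `v`,
such that some shortest `u-v` path avoids `w` and some shortest `v-w` path avoids `u`. -/
theorem exists_two_kDominated_cycle_vertices {V : Type*} [Fintype V]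
    (k : ℕ) (hk : 1 ≤ k) (G : SimpleGraph V) (hG : G.Connected)
    (a : V) (c : G.Walk a a) (hc : c.IsCycle) (hshort : (c.length : ℕ∞) = G.girth)
    (v : V) (hv : v ∉ c.support)
    (hdom : 2 * k ≤ ({x | x ∈ c.support ∧ G.dist v x ≤ k} : Set V).ncard) :
    ∃ u ∈ c.support, ∃ w ∈ c.support,
      G.dist v u ≤ k ∧ G.dist v w ≤ k ∧
      (∃ p : G.Walk u v, p.IsPath ∧ p.length = G.dist u v ∧ w ∉ p.support) ∧
      (∃ q : G.Walk v w, q.IsPath ∧ q.length = G.dist v w ∧ u ∉ q.support) :=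
  exists_two_kDominated_cycle_vertices_general k hk G hG a c hc hshort v hv hdom
end

section
/- For every integer k ≥ 1, if G is a finite connected graph with radius r, then γ_k(G) ≥ 2r/(2k + 1). -/
/-- The eccentricity of a vertex: the maximum distance from it to a vertex of the graph. -/
noncomputable def SimpleGraph.ecc {V : Type*} (G : SimpleGraph V) (v : V) : ℕ :=
  sSup {d : ℕ | ∃ u : V, G.dist v u = d}

/-- The radius of a graph: the minimum eccentricity among all vertices. -/
noncomputable def SimpleGraph.rad {V : Type*} (G : SimpleGraph V) : ℕ :=
  sInf {r : ℕ | ∃ v : V, G.ecc v = r}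

/-!
Let `S` be a minimum `k`-dominating set, `m = |S|`. Joining two vertices of `S` when their
distance in `G` is at most `2k + 1` gives a connected graph on `S`: the dominators of consecutive
vertices of a walk are that close. A connected graph on `m` vertices has a central vertex of
eccentricity at most `(m - 1) / 2`, or a central edge with every vertex within `(m - 2) / 2` of one
of its ends; by induction, removing two non-cut vertices each adjacent to the rest. Each hop in `S`
has length at most `2k + 1` in `G`, so the midpoint of a shortest path realising the central
vertex or edge lies within `(2k + 1) m / 2` of every vertex of `G`.
-/

universe u

lemma Nat.card_compl_singleton_add_one {α : Type*} [Finite α] (x : α) :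
    Nat.card ({x}ᶜ : Set α) + 1 = Nat.card α := by
  rw [Nat.card_coe_set_eq, ← Set.ncard_singleton x, Set.ncard_compl_add_ncard]

namespace SimpleGraph

variable {V : Type u} {W : Type*} {G : SimpleGraph V} {H : SimpleGraph W} {u v : V}

lemma Reachable.dist_map_le (f : G →g H) (h : G.Reachable u v) :
    H.dist (f u) (f v) ≤ G.dist u v := by
  obtain ⟨p, hp⟩ := h.exists_walk_length_eq_dist
  simpa [hp] using H.dist_le (p.map f)

lemma Connected.exists_two_mul_dist_le (hG : G.Connected) (u v : V) :
    ∃ c, 2 * G.dist c u ≤ G.dist u v + 1 ∧ 2 * G.dist c v ≤ G.dist u v + 1 := by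
  obtain ⟨p, hp⟩ := hG.exists_walk_length_eq_dist u v
  refine ⟨p.getVert (p.length / 2), ?_, ?_⟩
  · have := G.dist_le (p.take (p.length / 2))
    rw [Walk.take_length] at this
    rw [dist_comm]
    omega
  · have := G.dist_le (p.drop (p.length / 2))
    rw [Walk.drop_length] at this
    omega

lemma Connected.exists_ne_connected_induce_compl_singleton [Finite V] [Nontrivial V]
    (hG : G.Connected) (z : V) : ∃ x ≠ z, (G.induce {x}ᶜ).Connected := by
  classical
  have := Fintype.ofFinite V
  obtain ⟨T, hTG, hT⟩ := hG.exists_isTree_le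
  obtain ⟨x₁, x₂, hne, hx₁, hx₂⟩ := hT.exists_ne_and_degree_eq_one
  have leaf_removal {x : V} (hx : T.degree x = 1) : (G.induce {x}ᶜ).Connected :=
    (hT.connected.induce_compl_singleton_of_degree_eq_one hx).mono fun _ _ h ↦ hTG h
  by_cases h : x₁ = z
  · exact ⟨x₂, h ▸ hne.symm, leaf_removal hx₂⟩
  · exact ⟨x₁, h, leaf_removal hx₁⟩

/-- Two vertices `x` and `x'` can be removed so that the rest stays connected and each of them
keeps a neighbour in the rest: `x'` is chosen in `G - x` away from a neighbour of `x`. -/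
lemma Connected.exists_embedding_card_add_two [Finite V] (hG : G.Connected)
    (hV : 3 ≤ Nat.card V) :
    ∃ (V' : Type u) (G' : SimpleGraph V') (f : G' ↪g G), G'.Connected ∧
      Nat.card V' + 2 = Nat.card V ∧ ∀ v ∉ Set.range f, ∃ w, G.Adj (f w) v := by
  have : Nontrivial V := Finite.one_lt_card_iff_nontrivial.mp (by omega)
  obtain ⟨z⟩ := hG.nonempty
  obtain ⟨x, -, hx⟩ := hG.exists_ne_connected_induce_compl_singleton z
  obtain ⟨y, hxy⟩ := hG.preconnected.exists_adj_of_nontrivial x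
  have hcard := Nat.card_compl_singleton_add_one x
  have : Nontrivial ({x}ᶜ : Set V) := Finite.one_lt_card_iff_nontrivial.mp (by omega)
  let y' : ({x}ᶜ : Set V) := ⟨y, hxy.ne.symm⟩
  obtain ⟨x', hx'y, hx'⟩ := hx.exists_ne_connected_induce_compl_singleton y'
  obtain ⟨y'', hx'y''⟩ := hx.preconnected.exists_adj_of_nontrivial x'
  refine ⟨_, _, (Embedding.induce _).comp (Embedding.induce {x'}ᶜ), hx',
    by have := Nat.card_compl_singleton_add_one x'; omega, fun v hv ↦ ?_⟩
  by_cases hvx : v = x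
  · exact ⟨⟨y', hx'y.symm⟩, hvx ▸ hxy.symm⟩
  · obtain rfl : x' = ⟨v, hvx⟩ := by
      by_contra h
      exact hv ⟨⟨⟨v, hvx⟩, Ne.symm h⟩, rfl⟩
    exact ⟨⟨y'', hx'y''.ne.symm⟩, hx'y''.symm⟩

/-- For `a = b` this says that `a` has eccentricity at most `(n - 1) / 2`; for adjacent `a` and
`b`, that every vertex is within `(n - 2) / 2` of `a` or of `b`. -/
def IsCentralPair (G : SimpleGraph V) (n : ℕ) (a b : V) : Prop :=
  G.dist a b ≤ 1 ∧ ∀ v, 2 * min (G.dist a v) (G.dist b v) + G.dist a b < n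

lemma IsCentralPair.map {n : ℕ} {a b : W} (hG : G.Connected) (hH : H.Preconnected)
    (f : H →g G) (hadj : ∀ v ∉ Set.range f, ∃ w, G.Adj (f w) v) (h : H.IsCentralPair n a b) :
    G.IsCentralPair (n + 2) (f a) (f b) := by
  obtain ⟨hab, hcentral⟩ := h
  have hdist (a b : W) : G.dist (f a) (f b) ≤ H.dist a b := (hH a b).dist_map_le f
  refine ⟨(hdist a b).trans hab, fun v ↦ ?_⟩
  have := hdist a b
  by_cases hv : v ∈ Set.range f
  · obtain ⟨w, rfl⟩ := hv
    have := hcentral w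
    have := hdist a w
    have := hdist b w
    omega
  · obtain ⟨w, hwv⟩ := hadj v hv
    have hstep (c : W) : G.dist (f c) v ≤ G.dist (f c) (f w) + 1 :=
      hG.dist_triangle.trans_eq (by rw [dist_eq_one_iff_adj.mpr hwv])
    have := hcentral w
    have := hdist a w
    have := hdist b w
    have := hstep a
    have := hstep b
    omega

theorem Connected.exists_isCentralPair [Finite V] (hG : G.Connected) :
    ∃ a b, G.IsCentralPair (Nat.card V) a b := by
  induction hn : Nat.card V using Nat.strong_induction_on generalizing V with
  | _ n ih =>
    have := hG.nonempty
    have hn0 : 0 < n := hn ▸ Nat.card_pos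
    obtain hn1 | hn2 | hn3 : n = 1 ∨ n = 2 ∨ 3 ≤ n := by omega
    · obtain ⟨x, hx⟩ := Nat.card_eq_one_iff_exists.mp (hn.trans hn1)
      refine ⟨x, x, by simp, fun v ↦ ?_⟩
      simp [hx v, hn1]
    · obtain ⟨x, y, hxy, hV⟩ := Nat.card_eq_two_iff.mp (hn.trans hn2)
      have : Nontrivial V := ⟨x, y, hxy⟩
      have hmem (v : V) : v = x ∨ v = y := by
        have : v ∈ ({x, y} : Set V) := hV ▸ Set.mem_univ v
        simpa using this
      obtain ⟨w, hxw⟩ := hG.preconnected.exists_adj_of_nontrivial x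
      obtain rfl : w = y := (hmem w).resolve_left hxw.ne.symm
      refine ⟨x, w, (dist_eq_one_iff_adj.mpr hxw).le, fun v ↦ ?_⟩
      rcases hmem v with rfl | rfl <;> simp [dist_eq_one_iff_adj.mpr hxw, hn2]
    · obtain ⟨V', G', f, hG', hV', hadj⟩ := hG.exists_embedding_card_add_two (hn ▸ hn3)
      have : Finite V' := Finite.of_injective f f.injective
      obtain ⟨a, b, hab⟩ := ih (Nat.card V') (by omega) hG' rfl
      rw [← hn, ← hV']
      exact ⟨f a, f b, hab.map hG hG'.preconnected f.toHom hadj⟩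

/-- The `d`-th power of `G`. Only meaningful for connected `G`, since `dist` is `0` between
vertices in different components. -/
def power (G : SimpleGraph V) (d : ℕ) : SimpleGraph V where
  Adj u v := u ≠ v ∧ G.dist u v ≤ d
  symm := ⟨fun _ _ h ↦ ⟨h.1.symm, G.dist_comm ▸ h.2⟩⟩
  loopless := ⟨fun _ h ↦ h.1 rfl⟩

lemma Connected.dist_le_mul_length_power (hG : G.Connected) {d : ℕ} :
    ∀ {u v : V} (p : (G.power d).Walk u v), G.dist u v ≤ d * p.length
  | _, _, .nil => by simp
  | u, w, .cons (v := v) h p => by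
    have := hG.dist_le_mul_length_power p
    have : G.dist u w ≤ G.dist u v + G.dist v w := hG.dist_triangle
    rw [Walk.length_cons, Nat.mul_succ]
    have := h.2
    omega

lemma exists_isKDomSet_ncard_eq_kDomNum (G : SimpleGraph V) (k : ℕ) :
    ∃ S, G.IsKDomSet k S ∧ S.ncard = G.kDomNum k :=
  Nat.sInf_mem (s := {n | ∃ S, G.IsKDomSet k S ∧ S.ncard = n})
    ⟨_, Set.univ, fun v ↦ ⟨v, trivial, .nil, Nat.zero_le k⟩, rfl⟩

lemma rad_le_of_forall_dist_le {c : V} {r : ℕ} (h : ∀ v, G.dist c v ≤ r) : G.rad ≤ r :=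
  (Nat.sInf_le (s := {r | ∃ v, G.ecc v = r}) ⟨c, rfl⟩).trans <|
    csSup_le (s := {d | ∃ v, G.dist c v = d}) ⟨0, c, dist_self⟩ <| by rintro _ ⟨v, rfl⟩; exact h v

namespace IsKDomSet

variable {k : ℕ} {S : Set V}

lemma exists_dist_le (hS : G.IsKDomSet k S) (v : V) : ∃ s ∈ S, G.dist s v ≤ k := by
  obtain ⟨s, hs, p, hp⟩ := hS v
  exact ⟨s, hs, (G.dist_le p).trans hp⟩

lemma connected_induce_power (hG : G.Connected) (hS : G.IsKDomSet k S) :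
    ((G.power (2 * k + 1)).induce S).Connected := by
  set H := (G.power (2 * k + 1)).induce S
  have reachable_of_dist_le {s t : S} (h : G.dist s t ≤ 2 * k + 1) : H.Reachable s t := by
    by_cases hst : s = t
    · exact hst ▸ .rfl
    · exact Adj.reachable ⟨fun h ↦ hst (Subtype.ext h), h⟩
  have key {w t : V} (p : G.Walk w t) (ht : t ∈ S) (s : S) (hs : G.dist s w ≤ k) :
      H.Reachable s ⟨t, ht⟩ := by
    induction p generalizing s with
    | nil => exact reachable_of_dist_le (by dsimp only; omega)
    | @cons w w' _ h p ih =>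
      obtain ⟨s', hs', hs'w'⟩ := hS.exists_dist_le w'
      refine (reachable_of_dist_le (t := ⟨s', hs'⟩) ?_).trans (ih ht _ hs'w')
      have hsw' : G.dist s w' ≤ k + 1 :=
        hG.dist_triangle.trans (by rw [dist_eq_one_iff_adj.mpr h]; omega)
      dsimp only
      calc G.dist s s' ≤ G.dist s w' + G.dist w' s' := hG.dist_triangle
        _ ≤ 2 * k + 1 := by rw [dist_comm] at hs'w'; omega
  obtain ⟨v⟩ := hG.nonempty
  obtain ⟨s, hs, -⟩ := hS v
  refine connected_iff _ |>.mpr ⟨fun a b ↦ ?_, ⟨⟨s, hs⟩⟩⟩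
  obtain ⟨p⟩ := hG.preconnected a b
  exact key p b.2 a (by simp)

lemma exists_forall_two_mul_dist_le (hG : G.Connected) (hS : G.IsKDomSet k S)
    (hSfin : S.Finite) : ∃ c, ∀ v, 2 * G.dist c v ≤ (2 * k + 1) * S.ncard := by
  have := hSfin.to_subtype
  set H := (G.power (2 * k + 1)).induce S
  have hH : H.Connected := hS.connected_induce_power hG
  have hdist (a b : S) : G.dist a b ≤ (2 * k + 1) * H.dist a b := by
    obtain ⟨p, hp⟩ := hH.exists_walk_length_eq_dist a b
    have := hG.dist_le_mul_length_power (p.map (Embedding.induce S).toHom)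
    rwa [Walk.length_map, hp] at this
  obtain ⟨a, b, hab, hcentral⟩ := hH.exists_isCentralPair
  obtain ⟨c, hca, hcb⟩ := hG.exists_two_mul_dist_le a b
  refine ⟨c, fun v ↦ ?_⟩
  obtain ⟨s, hs, hsv⟩ := hS.exists_dist_le v
  obtain ⟨x, hcx, hxs⟩ : ∃ x : S, 2 * G.dist c x ≤ G.dist a b + 1 ∧
      2 * H.dist x ⟨s, hs⟩ + H.dist a b + 1 ≤ S.ncard := by
    have := hcentral ⟨s, hs⟩
    rw [Nat.card_coe_set_eq] at this
    rcases min_choice (H.dist a ⟨s, hs⟩) (H.dist b ⟨s, hs⟩) with h | h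
    · exact ⟨a, hca, by omega⟩
    · exact ⟨b, hcb, by omega⟩
  have hcv : G.dist c v ≤ G.dist c x + G.dist x s + G.dist s v :=
    hG.dist_triangle.trans (Nat.add_le_add_right hG.dist_triangle _)
  have := hdist a b
  have : G.dist x s ≤ (2 * k + 1) * H.dist x ⟨s, hs⟩ := hdist x ⟨s, hs⟩
  calc 2 * G.dist c v ≤ (2 * k + 1) * (H.dist a b + 2 * H.dist x ⟨s, hs⟩ + 1) := by
        have : (2 * k + 1) * (H.dist a b + 2 * H.dist x ⟨s, hs⟩ + 1) =
            (2 * k + 1) * H.dist a b + 2 * ((2 * k + 1) * H.dist x ⟨s, hs⟩) + 2 * k + 1 := by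
          ring
        omega
    _ ≤ (2 * k + 1) * S.ncard := Nat.mul_le_mul_left _ (by omega)

end IsKDomSet

end SimpleGraph

theorem kDomNum_ge_radius_general {V : Type*} [Fintype V] (k : ℕ)
    (G : SimpleGraph V) (hG : G.Connected) :
    (2 * (G.rad : ℝ)) / (2 * k + 1) ≤ (G.kDomNum k : ℝ) := by
  obtain ⟨S, hS, hcard⟩ := G.exists_isKDomSet_ncard_eq_kDomNum k
  obtain ⟨c, hc⟩ := hS.exists_forall_two_mul_dist_le hG S.toFinite
  rw [hcard] at hc
  have hrad : G.rad ≤ (2 * k + 1) * G.kDomNum k / 2 :=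
    G.rad_le_of_forall_dist_le (c := c) fun v ↦ by have := hc v; omega
  rw [div_le_iff₀ (by positivity), mul_comm (G.kDomNum k : ℝ)]
  exact_mod_cast (by omega : 2 * G.rad ≤ (2 * k + 1) * G.kDomNum k)

/-- If `G` is a finite connected graph with radius `r`, then `γ_k(G) ≥ 2r/(2k+1)`. -/
theorem kDomNum_ge_radius {V : Type*} [Fintype V] (k : ℕ) (hk : 1 ≤ k)
    (G : SimpleGraph V) (hG : G.Connected) :
    (2 * (G.rad : ℝ)) / (2 * k + 1) ≤ (G.kDomNum k : ℝ) :=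
  kDomNum_ge_radius_general k G hG
end
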